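/- arXiv:1710.02224 — 2 statements merged into one kernel-verified Lean document; each statement's English description precedes it below -/
import Mathlib

section
/- Total coin usage over one period for a divisor chain: let s_1 = 1 and s_{i+1} = n_{i+1} · s_i for positive integers n_2, …, n_d, and set m = s_d and q_i = s_{i+1}/s_i. Then 2 · ∑_{n=0}^{m−1} r(n) = m · ∑_{i=1}^{d−1} (q_i − 1), where r(n) is the minimal coin count of n with denominations (s_1, …, s_d). Equivalently, the average minimal coin count over n ∈ {0, …, m−1} is (1/2) ∑_{i=1}^{d−1} (s_{i+1}/s_i − 1). -/
/-- The minimal coin count of `n` with the `d` denominations `s 0, …, s (d-1)`. -/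
noncomputable def minCoinCount (d : ℕ) (s : ℕ → ℕ) (n : ℕ) : ℕ :=
  sInf {k : ℕ | ∃ a : Fin d → ℕ,
    (∑ i : Fin d, a i * s (i : ℕ)) = n ∧ (∑ i : Fin d, a i) = k}

/-!
For a divisor chain `1 = s 0 ∣ s 1 ∣ ⋯ ∣ s e` the greedy algorithm is optimal. The greedy
count never increases when a denomination is added on top, so it is at most `1` on every
denomination; it is also subadditive (carries only merge coins), hence it bounds the size of
every representation from below.

The greedy count is the digit sum of `n` in the mixed radix `(q 0, …, q (e-1))`. Writing
`n < q · s e` as `n = j · s e + t`, the top digit `j` runs over `0, …, q - 1` once for each `t`,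
which gives `T (e+1) = q · T e + s e · q (q - 1) / 2` for the totals `T e = ∑_{n < s e} r(n)`.
-/

structure IsDivisorChain (s : ℕ → ℕ) (e : ℕ) : Prop where
  zero : s 0 = 1
  succ : ∀ i < e, ∃ k, 0 < k ∧ s (i + 1) = k * s i

namespace IsDivisorChain

variable {s : ℕ → ℕ} {e : ℕ}

theorem of_le {e' : ℕ} (h : IsDivisorChain s e) (he' : e' ≤ e) : IsDivisorChain s e' :=
  ⟨h.zero, fun i hi => h.succ i (by omega)⟩

theorem pos (h : IsDivisorChain s e) {i : ℕ} (hi : i ≤ e) : 0 < s i := by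
  induction i with
  | zero => simp [h.zero]
  | succ i ih =>
    obtain ⟨k, hk, hsk⟩ := h.succ i (by omega)
    rw [hsk]
    exact Nat.mul_pos hk (ih (by omega))

end IsDivisorChain

/-- The greedy coin count of `n` for the denominations `s 0, …, s e`; the bottom level counts
in units of `1`, whatever `s 0` is. -/
def greedyCount (s : ℕ → ℕ) : ℕ → ℕ → ℕ
  | 0, n => n
  | e + 1, n => n / s (e + 1) + greedyCount s e (n % s (e + 1))

section greedyCount

variable {s : ℕ → ℕ} {e : ℕ}

@[simp]
theorem greedyCount_zero_right : greedyCount s e 0 = 0 := by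
  induction e with
  | zero => rfl
  | succ e ih => simp [greedyCount, ih]

theorem greedyCount_succ_of_lt {n : ℕ} (hn : n < s (e + 1)) :
    greedyCount s (e + 1) n = greedyCount s e n := by
  simp [greedyCount, Nat.div_eq_of_lt hn, Nat.mod_eq_of_lt hn]

theorem greedyCount_mul_add (h0 : s 0 = 1) (hpos : 0 < s e) (k r : ℕ) :
    greedyCount s e (k * s e + r) = k + greedyCount s e r := by
  cases e with
  | zero => simp [greedyCount, h0]
  | succ e =>
    simp only [greedyCount, Nat.mul_comm k, Nat.mul_add_div hpos, Nat.mul_add_mod]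
    omega

theorem greedyCount_mul (h0 : s 0 = 1) (hpos : 0 < s e) (k : ℕ) :
    greedyCount s e (k * s e) = k := by
  simpa using greedyCount_mul_add h0 hpos k 0

theorem greedyCount_succ_le (h : IsDivisorChain s (e + 1)) (n : ℕ) :
    greedyCount s (e + 1) n ≤ greedyCount s e n := by
  obtain ⟨k, hk, hsk⟩ := h.succ e (by omega)
  calc greedyCount s (e + 1) n
      = n / s (e + 1) + greedyCount s e (n % s (e + 1)) := rfl
    _ ≤ n / s (e + 1) * k + greedyCount s e (n % s (e + 1)) := by
      gcongr
      exact Nat.le_mul_of_pos_right _ hk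
    _ = greedyCount s e n := by
      rw [← greedyCount_mul_add h.zero (h.pos (by omega)), Nat.mul_assoc, ← hsk,
        Nat.div_add_mod']

theorem greedyCount_le_of_le (h : IsDivisorChain s e) {i : ℕ} (hi : i ≤ e) (n : ℕ) :
    greedyCount s e n ≤ greedyCount s i n := by
  induction e, hi using Nat.le_induction with
  | base => rfl
  | succ e hie ih => exact (greedyCount_succ_le h n).trans (ih (h.of_le (by omega)))

theorem greedyCount_mul_denom_le (h : IsDivisorChain s e) {i : ℕ} (hi : i ≤ e) (k : ℕ) :
    greedyCount s e (k * s i) ≤ k :=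
  (greedyCount_le_of_le h hi _).trans_eq (greedyCount_mul h.zero (h.pos hi) k)

theorem greedyCount_add_le (h : IsDivisorChain s e) (x y : ℕ) :
    greedyCount s e (x + y) ≤ greedyCount s e x + greedyCount s e y := by
  induction e generalizing x y with
  | zero => simp [greedyCount]
  | succ e ih =>
    set S := s (e + 1)
    have hS : 0 < S := h.pos le_rfl
    have hsplit : x + y = (x / S + y / S) * S + (x % S + y % S) := by
      rw [Nat.add_mul, Nat.add_add_add_comm, Nat.div_add_mod', Nat.div_add_mod']
    calc greedyCount s (e + 1) (x + y)
        = x / S + y / S + greedyCount s (e + 1) (x % S + y % S) := by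
          rw [hsplit, greedyCount_mul_add h.zero hS]
      _ ≤ x / S + y / S + greedyCount s e (x % S + y % S) := by
          gcongr
          exact greedyCount_succ_le h _
      _ ≤ x / S + y / S + (greedyCount s e (x % S) + greedyCount s e (y % S)) := by
          gcongr
          exact ih (h.of_le (by omega)) _ _
      _ = greedyCount s (e + 1) x + greedyCount s (e + 1) y := by
          simp only [greedyCount]
          ring

theorem greedyCount_le_sum (h : IsDivisorChain s e) (a : Fin (e + 1) → ℕ) :
    greedyCount s e (∑ i, a i * s i) ≤ ∑ i, a i :=
  calc greedyCount s e (∑ i, a i * s i)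
      ≤ ∑ i, greedyCount s e (a i * s i) :=
        Finset.le_sum_of_subadditive _ greedyCount_zero_right.le (greedyCount_add_le h) _ _
    _ ≤ ∑ i, a i := Finset.sum_le_sum fun i _ => greedyCount_mul_denom_le h (by omega) (a i)

theorem exists_sum_eq_greedyCount (h0 : s 0 = 1) (e n : ℕ) :
    ∃ a : Fin (e + 1) → ℕ, ∑ i, a i * s i = n ∧ ∑ i, a i = greedyCount s e n := by
  induction e generalizing n with
  | zero => exact ⟨fun _ => n, by simp [h0], by simp [greedyCount]⟩
  | succ e ih =>
    obtain ⟨b, hb_val, hb_count⟩ := ih (n % s (e + 1))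
    refine ⟨Fin.snoc b (n / s (e + 1)), ?_, ?_⟩
    · simp only [Fin.sum_univ_castSucc, Fin.snoc_castSucc, Fin.snoc_last, Fin.val_castSucc,
        Fin.val_last, hb_val, Nat.mod_add_div']
    · simp only [Fin.sum_univ_castSucc, Fin.snoc_castSucc, Fin.snoc_last, hb_count, greedyCount,
        Nat.add_comm]

theorem minCoinCount_eq_greedyCount (h : IsDivisorChain s e) (n : ℕ) :
    minCoinCount (e + 1) s n = greedyCount s e n := by
  refine IsLeast.csInf_eq ⟨exists_sum_eq_greedyCount h.zero e n, ?_⟩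
  rintro _ ⟨a, rfl, rfl⟩
  exact greedyCount_le_sum h a

theorem sum_range_mul_greedyCount (h0 : s 0 = 1) (hpos : 0 < s e) (k : ℕ) :
    ∑ n ∈ Finset.range (k * s e), greedyCount s e n =
      k * ∑ n ∈ Finset.range (s e), greedyCount s e n + s e * ∑ j ∈ Finset.range k, j := by
  induction k with
  | zero => simp
  | succ k ih =>
    simp only [Nat.succ_mul, Finset.sum_range_add, ih, greedyCount_mul_add h0 hpos,
      Finset.sum_add_distrib, Finset.sum_const, Finset.card_range, smul_eq_mul,
      Finset.sum_range_succ]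
    ring

theorem two_mul_sum_range_greedyCount (h : IsDivisorChain s e) :
    2 * ∑ n ∈ Finset.range (s e), greedyCount s e n =
      s e * ∑ i ∈ Finset.range e, (s (i + 1) / s i - 1) := by
  induction e with
  | zero => simp [h.zero, greedyCount]
  | succ e ih =>
    obtain ⟨k, -, hsk⟩ := h.succ e (by omega)
    have hpos : 0 < s e := h.pos (by omega)
    have hq : s (e + 1) / s e = k := by rw [hsk, Nat.mul_div_cancel _ hpos]
    have hlower : ∀ n ∈ Finset.range (s (e + 1)), greedyCount s (e + 1) n = greedyCount s e n :=
      fun n hn => greedyCount_succ_of_lt (Finset.mem_range.mp hn)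
    rw [Finset.sum_congr rfl hlower, Finset.sum_range_succ, hq, hsk,
      sum_range_mul_greedyCount h.zero hpos]
    have htotal := ih (h.of_le (by omega))
    have hgauss := Finset.sum_range_id_mul_two k
    linear_combination k * htotal + s e * hgauss

end greedyCount

theorem total_coin_usage_divisor_chain_general (d : ℕ) (s : ℕ → ℕ)
    (hs0 : s 0 = 1)
    (hchain : ∀ i, i + 1 < d → ∃ k, 0 < k ∧ s (i + 1) = k * s i) :
    2 * ∑ n ∈ Finset.range (s (d - 1)), minCoinCount d s n =
      s (d - 1) * ∑ i ∈ Finset.range (d - 1), (s (i + 1) / s i - 1) := by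
  cases d with
  | zero => simp [hs0, minCoinCount]
  | succ e =>
    have h : IsDivisorChain s e := ⟨hs0, fun i hi => hchain i (by omega)⟩
    simp only [Nat.add_sub_cancel, minCoinCount_eq_greedyCount h]
    exact two_mul_sum_range_greedyCount h

/-- Total coin usage over one period for a divisor chain (`0`-based indexing):
with `m = s (d-1)` and `q i = s (i+1) / s i`,
`2 · ∑_{n<m} r(n) = m · ∑_{i<d-1} (q i − 1)`. -/
theorem total_coin_usage_divisor_chain (d : ℕ) (s : ℕ → ℕ) (hd : 1 ≤ d)
    (hs0 : s 0 = 1)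
    (hchain : ∀ i, i + 1 < d → ∃ k, 0 < k ∧ s (i + 1) = k * s i) :
    2 * ∑ n ∈ Finset.range (s (d - 1)), minCoinCount d s n =
      s (d - 1) * ∑ i ∈ Finset.range (d - 1), (s (i + 1) / s i - 1) :=
  total_coin_usage_divisor_chain_general d s hs0 hchain
end

section
/- Memory-capacity comparison between the DilatedRNN and the regular skip RNN: for every d ≥ 1, setting m = 2^{d−1}, one has ∑_{n=1}^{m} r_{dil}(n) ≤ ∑_{n=1}^{m} r_{skip}(n), where r_{dil}(n) is the minimal coin count of n with denominations (2^0, 2^1, …, 2^{d−1}) and r_{skip}(n) is the minimal coin count of n with denominations {1, m}. Explicitly, (d−1) · 2^{d−2} + 1 ≤ 2^{d−2} · (2^{d−1} − 1) + 1 for d ≥ 2, so the DilatedRNN's mean recurrent length grows only logarithmically in m while the regular skip RNN's grows linearly in m. -/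
/-- The minimal coin count of `n` with denominations `{1, m}`. -/
noncomputable def skipCoinCount (m n : ℕ) : ℕ :=
  sInf {k : ℕ | ∃ a b : ℕ, a * 1 + b * m = n ∧ a + b = k}

/-!
Every representation of `n` by the denominations `{1, m}` is also a representation by any
list of denominations containing `1` and `m`, with the same number of coins; hence the dilated
coin count is pointwise at most the skip coin count. The explicit inequality reduces to
`d - 1 < 2 ^ (d - 1)`.
-/

theorem minCoinCount_le {d : ℕ} {s : ℕ → ℕ} {n : ℕ} (a : Fin d → ℕ)
    (ha : ∑ i : Fin d, a i * s i = n) : minCoinCount d s n ≤ ∑ i : Fin d, a i :=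
  Nat.sInf_le ⟨a, ha, rfl⟩

theorem exists_skipCoinCount_eq (m n : ℕ) :
    ∃ a b : ℕ, a + b * m = n ∧ a + b = skipCoinCount m n := by
  obtain ⟨a, b, hab, hk⟩ := Nat.sInf_mem (s := {k : ℕ | ∃ a b : ℕ, a * 1 + b * m = n ∧ a + b = k})
    ⟨n, n, 0, by ring, rfl⟩
  exact ⟨a, b, by simpa using hab, hk⟩

theorem minCoinCount_le_skipCoinCount {d m : ℕ} {s : ℕ → ℕ} (i j : Fin d) (hi : s i = 1)
    (hj : s j = m) (n : ℕ) : minCoinCount d s n ≤ skipCoinCount m n := by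
  obtain ⟨a, b, hn, hk⟩ := exists_skipCoinCount_eq m n
  calc minCoinCount d s n ≤ ∑ k : Fin d, (Pi.single i a + Pi.single j b : Fin d → ℕ) k :=
        minCoinCount_le _ <| by
          simp only [Pi.add_apply, add_mul, Finset.sum_add_distrib, Pi.single_apply,
            ite_mul, zero_mul, Finset.sum_ite_eq', Finset.mem_univ, if_true, hi, hj, mul_one, hn]
    _ = skipCoinCount m n := by
        simp only [Pi.add_apply, Finset.sum_add_distrib, Finset.sum_pi_single', Finset.mem_univ,
          if_true, hk]

/-- Memory-capacity comparison between the DilatedRNN and the regular skip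
RNN: for every `d ≥ 1` with `m = 2^(d−1)`, the total minimal coin count with
dilated denominations `2^0, …, 2^(d−1)` is at most that with denominations
`{1, m}`; explicitly for `d ≥ 2`,
`(d−1)·2^(d−2) + 1 ≤ 2^(d−2)·(2^(d−1) − 1) + 1`. -/
theorem dilated_vs_skip_memory (d : ℕ) (hd : 1 ≤ d) :
    (∑ n ∈ Finset.Icc 1 (2 ^ (d - 1)), minCoinCount d (fun i => 2 ^ i) n ≤
        ∑ n ∈ Finset.Icc 1 (2 ^ (d - 1)), skipCoinCount (2 ^ (d - 1)) n) ∧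
      (2 ≤ d → (d - 1) * 2 ^ (d - 2) + 1 ≤ 2 ^ (d - 2) * (2 ^ (d - 1) - 1) + 1) := by
  refine ⟨Finset.sum_le_sum fun n _ => ?_, fun _ => ?_⟩
  · exact minCoinCount_le_skipCoinCount ⟨0, hd⟩ ⟨d - 1, by omega⟩ (pow_zero 2) rfl n
  · have : d - 1 ≤ 2 ^ (d - 1) - 1 := Nat.le_sub_one_of_lt (Nat.lt_two_pow_self)
    rw [mul_comm]
    gcongr
end
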